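/- arXiv:1804.11017 — 3 statements merged into one kernel-verified Lean document; each statement's English description precedes it below -/
import Mathlib

section
/- Over the alphabet Σ = {a, b, $, %}, let L₁ = ba⁺ba⁺$ and L₂ = ba⁺ba⁺%$. Then (L₁ ←min-sdi L₂) ∩ (ba⁺)²%$ = { b a^m b a^n %$ : n > m ≥ 1 }. -/
/-!
In a word `b a^m b a^n %$` of the intersection, counting `b`'s and `$`'s shows that the insertion
happens at the ends of `x = b a^i b a^j $`, so the matched outfix is `u = b a^i b a^j`, `v = $`,
and `u` is a prefix of `b a^m b a^n %`, giving `i = m` and `j ≤ n`. If `j ≤ i`, then `b a^j` is a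
border of `u`; hence minimality forces `m = i < j ≤ n`. Conversely, for `m < n` the word
`b a^m b a^n` is unbordered, and inserting `%` between it and `$` yields `b a^m b a^n %$`.
-/

/-- Site-directed insertion (SDI) of string `y` into string `x`. -/
def sdiStr {α : Type} (x y : List α) : Set (List α) :=
  { w | ∃ x₁ u z v x₂ : List α,
      x = x₁ ++ u ++ v ++ x₂ ∧ y = u ++ z ++ v ∧ u ≠ [] ∧ v ≠ [] ∧
      w = x₁ ++ u ++ z ++ v ++ x₂ }

/-- Site-directed insertion extended to languages. -/
def sdiLang {α : Type} (L₁ L₂ : Set (List α)) : Set (List α) :=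
  { w | ∃ x ∈ L₁, ∃ y ∈ L₂, w ∈ sdiStr x y }

/-- Alphabetic site-directed insertion of string `y` into string `x`. -/
def asdiStr {α : Type} (x y : List α) : Set (List α) :=
  { w | ∃ (x₁ x₂ z : List α) (a b : α),
      x = x₁ ++ [a] ++ [b] ++ x₂ ∧ y = [a] ++ z ++ [b] ∧
      w = x₁ ++ [a] ++ z ++ [b] ++ x₂ }

/-- Alphabetic site-directed insertion extended to languages. -/
def asdiLang {α : Type} (L₁ L₂ : Set (List α)) : Set (List α) :=
  { w | ∃ x ∈ L₁, ∃ y ∈ L₂, w ∈ asdiStr x y }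

/-- Maximal site-directed insertion of string `y` into string `x`. -/
def maxSdiStr {α : Type} (x y : List α) : Set (List α) :=
  { w | ∃ x₁ u z v x₂ : List α,
      x = x₁ ++ u ++ v ++ x₂ ∧ y = u ++ z ++ v ∧ u ≠ [] ∧ v ≠ [] ∧
      w = x₁ ++ u ++ z ++ v ++ x₂ ∧
      ¬ ∃ x₁' x₂' z' : List α, x₁' <:+ x₁ ∧ x₂' <+: x₂ ∧
          x₁' ++ x₂' ≠ [] ∧ y = x₁' ++ u ++ z' ++ v ++ x₂' }

/-- Maximal site-directed insertion extended to languages. -/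
def maxSdiLang {α : Type} (L₁ L₂ : Set (List α)) : Set (List α) :=
  { w | ∃ x ∈ L₁, ∃ y ∈ L₂, w ∈ maxSdiStr x y }

/-- Minimal site-directed insertion of string `y` into string `x`:
the words `u` and `v` of the matched outfix must be unbordered. -/
def minSdiStr {α : Type} (x y : List α) : Set (List α) :=
  { w | ∃ x₁ u z v x₂ : List α,
      x = x₁ ++ u ++ v ++ x₂ ∧ y = u ++ z ++ v ∧ u ≠ [] ∧ v ≠ [] ∧
      w = x₁ ++ u ++ z ++ v ++ x₂ ∧
      (∀ s : List α, s <:+ u → s ≠ [] → s ≠ u → ¬ s <+: u) ∧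
      (∀ p : List α, p <+: v → p ≠ [] → p ≠ v → ¬ p <:+ v) }

/-- Minimal site-directed insertion extended to languages. -/
def minSdiLang {α : Type} (L₁ L₂ : Set (List α)) : Set (List α) :=
  { w | ∃ x ∈ L₁, ∃ y ∈ L₂, w ∈ minSdiStr x y }

/-- The four-letter alphabet Σ = {a, b, $, %}. -/
inductive Sym4 : Type
  | a : Sym4
  | b : Sym4
  | dollar : Sym4
  | percent : Sym4
  deriving DecidableEq

instance instFintypeSym4 : Fintype Sym4 :=
  ⟨{Sym4.a, Sym4.b, Sym4.dollar, Sym4.percent}, fun x => by cases x <;> simp⟩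

namespace List

variable {α : Type} {a b c d : α}

theorem append_cons_inj_of_not_mem {x₁ x₂ y₁ y₂ : List α} (h₁ : b ∉ y₁) (h₂ : b ∉ y₂)
    (h : x₁ ++ b :: x₂ = y₁ ++ b :: y₂) : x₁ = y₁ ∧ x₂ = y₂ := by
  rcases append_eq_append_iff.1 h with ⟨t, rfl, ht⟩ | ⟨t, rfl, ht⟩
  · cases t with
    | nil => simp_all
    | cons e t =>
      obtain ⟨rfl, -⟩ := cons_eq_cons.1 ht
      simp at h₁
  · cases t with
    | nil => simp_all
    | cons e t =>
      obtain ⟨rfl, rfl⟩ := cons_eq_cons.1 ht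
      simp at h₂

theorem le_of_replicate_append_eq (hab : a ≠ b) {k m : ℕ} {l l' : List α}
    (h : replicate k a ++ l = replicate m a ++ b :: l') : k ≤ m := by
  by_contra! hmk
  obtain ⟨r, rfl⟩ : ∃ r, k = m + (r + 1) := ⟨k - m - 1, by omega⟩
  rw [replicate_add, replicate_succ, append_assoc, cons_append] at h
  exact hab (cons_eq_cons.1 (append_cancel_left h)).1

theorem replicate_append_cons_inj (hab : a ≠ b) {k m : ℕ} {l l' : List α}
    (h : replicate k a ++ b :: l = replicate m a ++ b :: l') : k = m ∧ l = l' := by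
  obtain rfl := (le_of_replicate_append_eq hab h).antisymm (le_of_replicate_append_eq hab h.symm)
  exact ⟨rfl, (cons_eq_cons.1 (append_cancel_left h)).2⟩

theorem eq_nil_of_prefix_cons_of_not_mem {l₁ l₂ : List α} (h : l₁ <+: c :: l₂) (hc : c ∉ l₁) :
    l₁ = [] := by
  rcases prefix_cons_iff.1 h with h | ⟨t, rfl, -⟩
  · exact h
  · simp at hc

theorem eq_nil_of_suffix_concat_of_not_mem {l₁ l₂ : List α} (h : l₁ <:+ l₂ ++ [c])
    (hc : c ∉ l₁) : l₁ = [] := by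
  rcases suffix_concat_iff.1 h with h | ⟨t, rfl, -⟩
  · exact h
  · simp at hc

theorem eq_singleton_of_suffix_append_pair {l₁ l₂ : List α} (h : l₁ <:+ l₂ ++ [c, d])
    (hc : c ∉ l₁) (hne : l₁ ≠ []) : l₁ = [d] := by
  rw [← singleton_append, ← append_assoc] at h
  rcases suffix_concat_iff.1 h with h | ⟨t, rfl, ht⟩
  · exact absurd h hne
  · rw [eq_nil_of_suffix_concat_of_not_mem ht fun hct => hc (mem_append_left _ hct), nil_append]

def HasBorder (u : List α) : Prop :=
  ∃ s, s ≠ [] ∧ s ≠ u ∧ s <+: u ∧ s <:+ u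

theorem not_hasBorder_singleton : ¬HasBorder [c] := by
  rintro ⟨s, hne, hs, hpre, -⟩
  rcases prefix_cons_iff.1 hpre with rfl | ⟨t, rfl, ht⟩
  · exact hne rfl
  · exact hs (by rw [prefix_nil.1 ht])

theorem hasBorder_of_le {i j : ℕ} (h : j ≤ i) :
    HasBorder ([b] ++ replicate i a ++ [b] ++ replicate j a) := by
  refine ⟨b :: replicate j a, cons_ne_nil _ _, fun he => ?_,
    ⟨replicate (i - j) a ++ [b] ++ replicate j a, ?_⟩, ⟨[b] ++ replicate i a, by simp⟩⟩
  · have := congrArg length he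
    simp at this
    omega
  · simp only [cons_append, nil_append, append_assoc]
    rw [← append_assoc, replicate_append_replicate, Nat.add_sub_cancel' h]

theorem not_hasBorder_of_lt (hab : a ≠ b) {i j : ℕ} (h : i < j) :
    ¬HasBorder ([b] ++ replicate i a ++ [b] ++ replicate j a) := by
  rintro ⟨s, hne, hs, hpre, hsuf⟩
  simp only [cons_append, append_assoc] at hs hpre hsuf
  obtain ⟨s, rfl, -⟩ := (prefix_cons_iff.1 hpre).resolve_left hne
  obtain ⟨t, ht⟩ := (suffix_cons_iff.1 hsuf).resolve_left hs
  have hb : ∀ n, b ∉ replicate n a := fun _ hb => hab (eq_of_mem_replicate hb).symm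
  obtain rfl := (append_cons_inj_of_not_mem (hb i) (hb j) ht).2
  obtain ⟨r, hr⟩ := (prefix_cons_inj b).1 hpre
  exact absurd (le_of_replicate_append_eq hab hr) (not_le.2 h)

end List

section MinSdi

variable {α : Type}

theorem mem_minSdiStr_iff {x y w : List α} :
    w ∈ minSdiStr x y ↔ ∃ x₁ u z v x₂ : List α,
      x = x₁ ++ u ++ v ++ x₂ ∧ y = u ++ z ++ v ∧ u ≠ [] ∧ v ≠ [] ∧
      w = x₁ ++ u ++ z ++ v ++ x₂ ∧ ¬u.HasBorder ∧ ¬v.HasBorder := by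
  have hu (u : List α) : ¬u.HasBorder ↔ ∀ s, s <:+ u → s ≠ [] → s ≠ u → ¬s <+: u := by
    simp only [List.HasBorder, not_exists, not_and]
    exact forall_congr' fun s => by tauto
  have hv (v : List α) : ¬v.HasBorder ↔ ∀ p, p <+: v → p ≠ [] → p ≠ v → ¬p <:+ v := by
    simp only [List.HasBorder, not_exists, not_and]
    exact forall_congr' fun s => by tauto
  simp only [minSdiStr, Set.mem_ofPred_eq, ← hu, ← hv]

theorem append_mem_minSdiStr {u z v : List α} (hu : u ≠ []) (hv : v ≠ [])
    (hu' : ¬u.HasBorder) (hv' : ¬v.HasBorder) : u ++ z ++ v ∈ minSdiStr (u ++ v) (u ++ z ++ v) :=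
  mem_minSdiStr_iff.2 ⟨[], u, z, v, [], by simp, rfl, hu, hv, by simp, hu', hv'⟩

end MinSdi

section

open List Sym4

theorem lt_of_mem_minSdiStr {i j k l m n : ℕ} {x y w : List Sym4}
    (hx : x = [b] ++ replicate i a ++ [b] ++ replicate j a ++ [dollar])
    (hy : y = [b] ++ replicate k a ++ [b] ++ replicate l a ++ [percent, dollar])
    (hw : w = [b] ++ replicate m a ++ [b] ++ replicate n a ++ [percent, dollar])
    (h : w ∈ minSdiStr x y) : m < n := by
  obtain ⟨x₁, u, z, v, x₂, rfl, rfl, -, hv, rfl, hu, -⟩ := mem_minSdiStr_iff.1 h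
  have hsplit : x₁ ++ (u ++ z ++ v) ++ x₂ = x₁ ++ u ++ z ++ v ++ x₂ := by simp only [append_assoc]
  have hb : count b x₁ = 0 := by
    have := congrArg (count b) (hsplit.trans hw)
    simp [hy, count_replicate] at this
    omega
  have hd : count dollar x₂ = 0 := by
    have := congrArg (count dollar) (hsplit.trans hw)
    simp [hy, count_replicate] at this
    omega
  have hx₁ : x₁ <+: x₁ ++ u ++ v ++ x₂ := ⟨u ++ v ++ x₂, by simp⟩
  have hx₂ : x₂ <:+ x₁ ++ u ++ v ++ x₂ := suffix_append _ _
  rw [hx, singleton_append, cons_append, cons_append, cons_append] at hx₁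
  rw [hx] at hx₂
  obtain rfl : x₁ = [] := eq_nil_of_prefix_cons_of_not_mem hx₁ (count_eq_zero.1 hb)
  obtain rfl : x₂ = [] := eq_nil_of_suffix_concat_of_not_mem hx₂ (count_eq_zero.1 hd)
  simp only [nil_append, append_nil] at hx hw
  have hv_suf : v <:+ u ++ z ++ v := suffix_append _ _
  rw [hw] at hv_suf
  have hp : percent ∉ v := fun hpv => by
    have := mem_append_right u hpv
    simp [hx] at this
  obtain rfl : v = [dollar] := eq_singleton_of_suffix_append_pair hv_suf hp hv
  obtain rfl : u = [b] ++ replicate i a ++ [b] ++ replicate j a := append_cancel_right hx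
  simp only [cons_append, append_assoc, cons.injEq, true_and] at hw
  obtain ⟨rfl, hjn⟩ := replicate_append_cons_inj (by decide) hw
  have hij : i < j := lt_of_not_ge fun hji => hu (hasBorder_of_le hji)
  have hjn : j ≤ n := le_of_replicate_append_eq (by decide) hjn
  omega

theorem mem_minSdiStr_of_lt {m n : ℕ} (h : m < n) :
    [b] ++ replicate m a ++ [b] ++ replicate n a ++ [percent, dollar] ∈
      minSdiStr ([b] ++ replicate m a ++ [b] ++ replicate n a ++ [dollar])
        ([b] ++ replicate m a ++ [b] ++ replicate n a ++ [percent, dollar]) := by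
  rw [show [percent, dollar] = [percent] ++ [dollar] from rfl, ← append_assoc]
  exact append_mem_minSdiStr (by simp) (cons_ne_nil _ _) (not_hasBorder_of_lt (by decide) h)
    not_hasBorder_singleton

end

open Sym4 in
/-- With `L₁ = ba⁺ba⁺$` and `L₂ = ba⁺ba⁺%$`,
`(L₁ ←min-sdi L₂) ∩ (ba⁺)²%$ = { ba^m ba^n %$ : n > m ≥ 1 }`. -/
theorem minSdi_intersection :
    minSdiLang
        { w | ∃ i j : ℕ, 1 ≤ i ∧ 1 ≤ j ∧
            w = [b] ++ List.replicate i a ++ [b] ++ List.replicate j a ++ [dollar] }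
        { w | ∃ i j : ℕ, 1 ≤ i ∧ 1 ≤ j ∧
            w = [b] ++ List.replicate i a ++ [b] ++ List.replicate j a ++ [percent, dollar] }
      ∩ { w | ∃ i j : ℕ, 1 ≤ i ∧ 1 ≤ j ∧
            w = [b] ++ List.replicate i a ++ [b] ++ List.replicate j a ++ [percent, dollar] } =
    { w | ∃ m n : ℕ, 1 ≤ m ∧ m < n ∧
        w = [b] ++ List.replicate m a ++ [b] ++ List.replicate n a ++ [percent, dollar] } := by
  ext w
  constructor
  · rintro ⟨⟨x, ⟨i, j, -, -, hx⟩, y, ⟨k, l, -, -, hy⟩, hw⟩, m, n, hm, -, rfl⟩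
    exact ⟨m, n, hm, lt_of_mem_minSdiStr hx hy rfl hw, rfl⟩
  · rintro ⟨m, n, hm, hmn, rfl⟩
    have hn : 1 ≤ n := hm.trans hmn.le
    exact ⟨⟨_, ⟨m, n, hm, hn, rfl⟩, _, ⟨m, n, hm, hn, rfl⟩, mem_minSdiStr_of_lt hmn⟩,
      m, n, hm, hn, rfl⟩
end

section
/- Let R be a regular language and L a finite language over an alphabet Σ. Then the languages R ←max-sdi L, R ←min-sdi L, L ←max-sdi R, and L ←min-sdi R are all regular. -/
/-!
Since `L` is finite, each of the four languages is a finite union of pieces indexed by a word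
of `L` and one of its finitely many factorisations. Inserting `y` into `R` at the site `(u, v)`
gives the words `x₁ y x₂` with `x₁ u v x₂ ∈ R`; grouping `x₁` by its left quotient by `R`
(finitely many, by Myhill–Nerode) writes this as a finite union of products `A · {y} · B` of
regular languages. Maximality forbids finitely many pairs (suffix of `x₁`, prefix of `x₂`);
splitting on which of the forbidden suffixes occur in `x₁` turns this condition into a finite
union of products as well. Inserting `R` into a fixed word `x₁ u v x₂` gives
`{x₁} · Y · {x₂}` with `Y` a Boolean combination of `R` and languages `u' Σ* v'`.
-/

theorem List.finite_setOf_isPrefix {α : Type*} (y : List α) : {x | x <+: y}.Finite :=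
  y.inits.finite_toSet.subset fun x hx => (List.mem_inits x y).2 hx

theorem List.finite_setOf_isSuffix {α : Type*} (y : List α) : {x | x <:+ y}.Finite :=
  y.tails.finite_toSet.subset fun x hx => (List.mem_tails x y).2 hx

theorem List.finite_setOf_isInfix {α : Type*} (y : List α) : {x | x <:+: y}.Finite :=
  y.sublists.finite_toSet.subset fun _ hx => List.mem_sublists.2 hx.sublist

def List.Unbordered {α : Type*} (u : List α) : Prop :=
  ∀ s, s <:+ u → s ≠ [] → s ≠ u → ¬s <+: u

theorem List.unbordered_iff_forall_isPrefix {α : Type*} {v : List α} :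
    v.Unbordered ↔ ∀ p, p <+: v → p ≠ [] → p ≠ v → ¬p <:+ v :=
  ⟨fun h p hp h₀ hv hs => h p hs h₀ hv hp, fun h s hs h₀ hu hp => h s hp h₀ hu hs⟩

theorem forall_not_and_iff_exists_subset {ι : Type*} {s : Set ι} {P Q : ι → Prop} :
    (∀ i ∈ s, ¬(P i ∧ Q i)) ↔ ∃ T ⊆ s, (∀ i ∈ T, ¬P i) ∧ ∀ i ∈ s \ T, ¬Q i := by
  constructor
  · intro h
    exact ⟨{i ∈ s | ¬P i}, fun i hi => hi.1, fun i hi => hi.2,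
      fun i hi hQ => h i hi.1 ⟨not_not.1 fun hP => hi.2 ⟨hi.1, hP⟩, hQ⟩⟩
  · rintro ⟨T, -, hP, hQ⟩ i hi ⟨hPi, hQi⟩
    by_cases hiT : i ∈ T
    · exact hP i hiT hPi
    · exact hQ i ⟨hi, hiT⟩ hQi

namespace Language

variable {α : Type*} {L L₁ L₂ : Language α}

-- A set-builder used as a `Language` is tested through `Language`'s membership instance,
-- which `Set.mem_setOf_eq` does not match.
@[simp]
theorem mem_setOf {p : List α → Prop} {x : List α} :
    @Membership.mem (List α) (Language α) _ {y | p y} x ↔ p x := Iff.rfl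

@[simp]
theorem mem_singleton {x y : List α} : x ∈ ({y} : Language α) ↔ x = y := Iff.rfl

@[simp]
theorem mem_compl {x : List α} : x ∈ Lᶜ ↔ x ∉ L := Iff.rfl

@[simp]
theorem mem_top (x : List α) : x ∈ (⊤ : Language α) := trivial

theorem IsRegular.leftQuotient (h : L.IsRegular) (x : List α) : (L.leftQuotient x).IsRegular :=
  .of_finite_range_leftQuotient <| h.finite_range_leftQuotient.subset <| by
    rintro _ ⟨y, rfl⟩
    exact ⟨x ++ y, leftQuotient_append L x y⟩

theorem IsRegular.setOf_leftQuotient_eq (h : L.IsRegular) (Q : Language α) :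
    IsRegular ({x | L.leftQuotient x = Q} : Set (List α)) := by
  refine .of_finite_range_leftQuotient <| (h.finite_range_leftQuotient.image
    fun P => ({y | P.leftQuotient y = Q} : Set (List α))).subset ?_
  rintro _ ⟨x, rfl⟩
  exact ⟨L.leftQuotient x, ⟨x, rfl⟩,
    Set.ext fun y => iff_of_eq (congrArg (· = Q) (leftQuotient_append L x y).symm)⟩

theorem isRegular_of_finite (h : (L : Set (List α)).Finite) : L.IsRegular := by
  have hprefixes : (⋃ w ∈ L, {x : List α | x <+: w}).Finite :=
    h.biUnion fun w _ => List.finite_setOf_isPrefix w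
  refine .of_finite_range_leftQuotient <| ((hprefixes.image L.leftQuotient).insert 0).subset ?_
  rintro _ ⟨x, rfl⟩
  by_cases hx : ∃ y, x ++ y ∈ L
  · obtain ⟨y, hy⟩ := hx
    exact Or.inr ⟨x, Set.mem_biUnion hy ⟨y, rfl⟩, rfl⟩
  · exact Or.inl (Set.eq_empty_of_forall_notMem fun y hy => hx ⟨y, hy⟩)

theorem isRegular_bot : (⊥ : Language α).IsRegular :=
  isRegular_of_finite Set.finite_empty

theorem isRegular_top : (⊤ : Language α).IsRegular := by
  simpa using isRegular_bot.compl

theorem isRegular_singleton (w : List α) : ({w} : Language α).IsRegular :=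
  isRegular_of_finite (Set.finite_singleton w)

theorem leftQuotient_mul (L₁ L₂ : Language α) (x : List α) :
    (L₁ * L₂).leftQuotient x =
      L₁.leftQuotient x * L₂ + ⨆ b ∈ {b | ∃ a ∈ L₁, a ++ b = x}, L₂.leftQuotient b := by
  ext y
  simp only [mem_leftQuotient, mem_mul, mem_add, mem_iSup, List.append_eq_append_iff]
  constructor
  · rintro ⟨a, ha, b, hb, ⟨c, rfl, rfl⟩ | ⟨c, rfl, rfl⟩⟩
    · exact Or.inr ⟨c, ⟨a, ha, rfl⟩, hb⟩
    · exact Or.inl ⟨c, ha, b, hb, rfl⟩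
  · rintro (⟨c, hc, b, hb, rfl⟩ | ⟨b, ⟨a, ha, rfl⟩, hb⟩)
    · exact ⟨x ++ c, hc, b, hb, Or.inr ⟨c, rfl, rfl⟩⟩
    · exact ⟨a, ha, b ++ y, hb, Or.inl ⟨b, rfl, rfl⟩⟩

theorem IsRegular.mul (h₁ : L₁.IsRegular) (h₂ : L₂.IsRegular) : (L₁ * L₂).IsRegular := by
  refine .of_finite_range_leftQuotient <|
    ((h₁.finite_range_leftQuotient.prod h₂.finite_range_leftQuotient.finite_subsets).image
      fun p => p.1 * L₂ + sSup p.2).subset ?_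
  rintro _ ⟨x, rfl⟩
  refine ⟨(L₁.leftQuotient x, L₂.leftQuotient '' {b | ∃ a ∈ L₁, a ++ b = x}),
    ⟨⟨x, rfl⟩, Set.image_subset_range _ _⟩, ?_⟩
  rw [leftQuotient_mul, ← sSup_image]

theorem isRegular_biSup {ι : Type*} {s : Set ι} (hs : s.Finite) {f : ι → Language α}
    (h : ∀ i ∈ s, (f i).IsRegular) : (⨆ i ∈ s, f i).IsRegular := by
  induction s, hs using Set.Finite.induction_on with
  | empty => simpa using isRegular_bot
  | @insert i s _ _ ih =>
    rw [iSup_insert]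
    exact (h i (s.mem_insert i)).add (ih fun j hj => h j (Set.mem_insert_of_mem i hj))

theorem isRegular_setOf_forall_notMem {ι : Type*} {s : Set ι} (hs : s.Finite)
    {f : ι → Language α} (h : ∀ i ∈ s, (f i).IsRegular) :
    IsRegular {x | ∀ i ∈ s, x ∉ f i} := by
  have : (⨆ i ∈ s, f i)ᶜ = {x | ∀ i ∈ s, x ∉ f i} := by ext x; simp [mem_iSup]
  exact this ▸ (isRegular_biSup hs h).compl

/-- The language `u Σ* v`. -/
def framed (u v : List α) : Language α :=
  {y | ∃ z, y = u ++ z ++ v}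

theorem isRegular_framed (u v : List α) : (framed u v).IsRegular := by
  have : {u} * (⊤ * {v}) = framed u v := by ext y; simp [framed, mem_mul, eq_comm]
  exact this ▸ (isRegular_singleton u).mul (isRegular_top.mul (isRegular_singleton v))

theorem isRegular_setOf_forall_not_isSuffix {ι : Type*} {s : Set ι} (hs : s.Finite)
    (f : ι → List α) : IsRegular {x | ∀ i ∈ s, ¬f i <:+ x} := by
  have := isRegular_setOf_forall_notMem hs fun i _ => isRegular_framed [] (f i)
  simpa [framed, List.IsSuffix, eq_comm] using this

theorem isRegular_setOf_forall_not_isPrefix {ι : Type*} {s : Set ι} (hs : s.Finite)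
    (f : ι → List α) : IsRegular {x | ∀ i ∈ s, ¬f i <+: x} := by
  have := isRegular_setOf_forall_notMem hs fun i _ => isRegular_framed (f i) []
  simpa [framed, List.IsPrefix, eq_comm] using this

def replaceInfix (R A B : Language α) (m y : List α) : Language α :=
  {w | ∃ x₁ ∈ A, ∃ x₂ ∈ B, x₁ ++ m ++ x₂ ∈ R ∧ w = x₁ ++ y ++ x₂}

/-- Once `R.leftQuotient x₁ = Q` is fixed, the condition `x₁ ++ m ++ x₂ ∈ R` only says
`x₂ ∈ Q.leftQuotient m`. -/
theorem replaceInfix_eq_iSup (R A B : Language α) (m y : List α) :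
    replaceInfix R A B m y = ⨆ Q ∈ Set.range R.leftQuotient,
      (A ⊓ {x | R.leftQuotient x = Q}) * ({y} * (B ⊓ Q.leftQuotient m)) := by
  ext w
  simp only [replaceInfix, mem_setOf, mem_iSup, mem_mul, mem_inf, mem_singleton, Set.mem_range]
  constructor
  · rintro ⟨x₁, hx₁, x₂, hx₂, hR, rfl⟩
    exact ⟨_, ⟨x₁, rfl⟩, x₁, ⟨hx₁, rfl⟩, _, ⟨y, rfl, x₂, ⟨hx₂, by simpa using hR⟩, rfl⟩,
      by simp⟩
  · rintro ⟨_, ⟨x, rfl⟩, x₁, ⟨hx₁, hq⟩, _, ⟨_, rfl, x₂, ⟨hx₂, hR⟩, rfl⟩, rfl⟩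
    replace hq : R.leftQuotient x₁ = R.leftQuotient x := hq
    rw [← hq] at hR
    exact ⟨x₁, hx₁, x₂, hx₂, by simpa using hR, by simp⟩

theorem IsRegular.replaceInfix {R A B : Language α} (hR : R.IsRegular) (hA : A.IsRegular)
    (hB : B.IsRegular) (m y : List α) : (replaceInfix R A B m y).IsRegular := by
  rw [replaceInfix_eq_iSup]
  refine isRegular_biSup hR.finite_range_leftQuotient ?_
  rintro _ ⟨x, rfl⟩
  exact (hA.inf (hR.setOf_leftQuotient_eq _)).mul
    ((isRegular_singleton y).mul (hB.inf ((hR.leftQuotient x).leftQuotient m)))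

end Language

section SiteDirectedInsertion

open Language

variable {α : Type}

def maxSdiObstructions (y u v : List α) : Set (List α × List α) :=
  {p | p.1 ++ p.2 ≠ [] ∧ ∃ z, y = p.1 ++ u ++ z ++ v ++ p.2}

theorem finite_maxSdiObstructions (y u v : List α) : (maxSdiObstructions y u v).Finite :=
  ((List.finite_setOf_isPrefix y).prod (List.finite_setOf_isSuffix y)).subset <| by
    rintro ⟨s, p⟩ ⟨-, z, rfl⟩
    exact ⟨⟨u ++ z ++ v ++ p, by simp⟩, ⟨s ++ u ++ z ++ v, rfl⟩⟩

theorem maxSdiLang_eq_iSup_replaceInfix (R L : Language α) :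
    maxSdiLang R L = (⨆ y ∈ L, ⨆ u ∈ {u | u <+: y},
      ⨆ v ∈ {v | u ≠ [] ∧ v ≠ [] ∧ ∃ z, y = u ++ z ++ v}, ⨆ T ∈ 𝒫 maxSdiObstructions y u v,
        replaceInfix R {x | ∀ p ∈ T, ¬p.1 <:+ x}
          {x | ∀ p ∈ maxSdiObstructions y u v \ T, ¬p.2 <+: x} (u ++ v) y : Language α) := by
  refine Language.ext fun w => ?_
  simp only [maxSdiLang, maxSdiStr, mem_iSup]
  constructor
  · rintro ⟨x, hx, _, hy, x₁, u, z, v, x₂, rfl, rfl, hu, hv, rfl, hmax⟩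
    have hobs : ∀ p ∈ maxSdiObstructions (u ++ z ++ v) u v, ¬(p.1 <:+ x₁ ∧ p.2 <+: x₂) := by
      rintro ⟨s, p⟩ ⟨hsp, z', hz'⟩ ⟨hs, hp⟩
      exact hmax ⟨s, p, z', hs, hp, hsp, hz'⟩
    obtain ⟨T, hT, hA, hB⟩ := forall_not_and_iff_exists_subset.1 hobs
    exact ⟨_, hy, u, ⟨z ++ v, by simp⟩, v, ⟨hu, hv, z, rfl⟩, T, hT, x₁, hA, x₂, hB,
      List.append_assoc x₁ u v ▸ hx, by simp⟩
  · rintro ⟨y, hy, u, -, v, ⟨hu, hv, z, rfl⟩, T, hT, x₁, hA, x₂, hB, hx, rfl⟩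
    refine ⟨x₁ ++ u ++ v ++ x₂, List.append_assoc x₁ u v ▸ hx, _, hy, x₁, u, z, v, x₂, rfl, rfl,
      hu, hv, by simp, ?_⟩
    rintro ⟨s, p, z', hs, hp, hsp, hz'⟩
    exact forall_not_and_iff_exists_subset.2 ⟨T, hT, hA, hB⟩ (s, p) ⟨hsp, z', hz'⟩ ⟨hs, hp⟩

theorem Language.IsRegular.maxSdiLang_of_finite {R L : Language α} (hR : R.IsRegular)
    (hL : (L : Set (List α)).Finite) : IsRegular (maxSdiLang R L) := by
  rw [maxSdiLang_eq_iSup_replaceInfix]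
  refine isRegular_biSup hL fun y _ => isRegular_biSup (List.finite_setOf_isPrefix y) fun u _ =>
    isRegular_biSup ((List.finite_setOf_isSuffix y).subset ?_) fun v _ =>
      isRegular_biSup (finite_maxSdiObstructions y u v).finite_subsets fun T hT =>
        hR.replaceInfix
          (isRegular_setOf_forall_not_isSuffix ((finite_maxSdiObstructions y u v).subset hT) _)
          (isRegular_setOf_forall_not_isPrefix (finite_maxSdiObstructions y u v).sdiff _) _ _
  rintro v ⟨-, -, z, rfl⟩
  exact ⟨u ++ z, rfl⟩

theorem minSdiLang_eq_iSup_replaceInfix (R L : Language α) :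
    minSdiLang R L = (⨆ y ∈ L, ⨆ u ∈ {u | u <+: y},
      ⨆ v ∈ {v | u ≠ [] ∧ v ≠ [] ∧ (∃ z, y = u ++ z ++ v) ∧ u.Unbordered ∧ v.Unbordered},
        replaceInfix R ⊤ ⊤ (u ++ v) y : Language α) := by
  refine Language.ext fun w => ?_
  simp only [minSdiLang, minSdiStr, mem_iSup, ← List.unbordered_iff_forall_isPrefix]
  constructor
  · rintro ⟨x, hx, _, hy, x₁, u, z, v, x₂, rfl, rfl, hu, hv, rfl, hU, hV⟩
    exact ⟨_, hy, u, ⟨z ++ v, by simp⟩, v, ⟨hu, hv, ⟨z, rfl⟩, hU, hV⟩, x₁, trivial, x₂, trivial,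
      List.append_assoc x₁ u v ▸ hx, by simp⟩
  · rintro ⟨y, hy, u, -, v, ⟨hu, hv, ⟨z, rfl⟩, hU, hV⟩, x₁, -, x₂, -, hx, rfl⟩
    exact ⟨x₁ ++ u ++ v ++ x₂, List.append_assoc x₁ u v ▸ hx, _, hy, x₁, u, z, v, x₂, rfl, rfl,
      hu, hv, by simp, hU, hV⟩

theorem Language.IsRegular.minSdiLang_of_finite {R L : Language α} (hR : R.IsRegular)
    (hL : (L : Set (List α)).Finite) : IsRegular (minSdiLang R L) := by
  rw [minSdiLang_eq_iSup_replaceInfix]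
  refine isRegular_biSup hL fun y _ => isRegular_biSup (List.finite_setOf_isPrefix y) fun u _ =>
    isRegular_biSup ((List.finite_setOf_isSuffix y).subset ?_) fun v _ =>
      hR.replaceInfix isRegular_top isRegular_top _ _
  rintro v ⟨-, -, ⟨z, rfl⟩, -⟩
  exact ⟨u ++ z, rfl⟩

theorem isRegular_setOf_not_exists_extension (x₁ u v x₂ : List α) :
    IsRegular {y | ¬∃ s p z, s <:+ x₁ ∧ p <+: x₂ ∧ s ++ p ≠ [] ∧ y = s ++ u ++ z ++ v ++ p} := by
  have hfin : {p : List α × List α | p.1 <:+ x₁ ∧ p.2 <+: x₂ ∧ p.1 ++ p.2 ≠ []}.Finite :=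
    ((List.finite_setOf_isSuffix x₁).prod (List.finite_setOf_isPrefix x₂)).subset
      fun p hp => ⟨hp.1, hp.2.1⟩
  refine (congrArg IsRegular (Set.ext fun y => ?_)).mp
    (isRegular_setOf_forall_notMem hfin fun p _ => isRegular_framed (p.1 ++ u) (v ++ p.2))
  simp only [Set.mem_ofPred_eq, mem_setOf, Prod.forall, framed, not_exists, not_and,
    List.append_assoc]
  exact ⟨fun h s p z hs hp hsp => h s p ⟨hs, hp, hsp⟩ z,
    fun h s p hsp z => h s p z hsp.1 hsp.2.1 hsp.2.2⟩

theorem maxSdiLang_eq_iSup_singleton_mul (L R : Language α) :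
    maxSdiLang L R = (⨆ x ∈ L, ⨆ x₁ ∈ {x₁ | x₁ <+: x}, ⨆ u ∈ {u | u <:+: x},
      ⨆ v ∈ {v | v <:+: x}, ⨆ x₂ ∈ {x₂ | u ≠ [] ∧ v ≠ [] ∧ x = x₁ ++ u ++ v ++ x₂},
        {x₁} * ((R ⊓ framed u v ⊓ {y | ¬∃ s p z, s <:+ x₁ ∧ p <+: x₂ ∧ s ++ p ≠ [] ∧
          y = s ++ u ++ z ++ v ++ p}) * {x₂}) : Language α) := by
  refine Language.ext fun w => ?_
  simp only [maxSdiLang, maxSdiStr, mem_iSup, mem_mul, mem_singleton]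
  constructor
  · rintro ⟨x, hx, y, hy, x₁, u, z, v, x₂, rfl, rfl, hu, hv, rfl, hmax⟩
    exact ⟨_, hx, x₁, ⟨u ++ v ++ x₂, by simp⟩, u, ⟨x₁, v ++ x₂, by simp⟩, v,
      ⟨x₁ ++ u, x₂, rfl⟩, x₂, ⟨hu, hv, rfl⟩, x₁, rfl, _,
      ⟨u ++ z ++ v, ⟨⟨hy, z, rfl⟩, hmax⟩, x₂, rfl, rfl⟩, by simp⟩
  · rintro ⟨x, hx, x₁, -, u, -, v, -, x₂, ⟨hu, hv, rfl⟩, _, rfl, _,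
      ⟨y, ⟨⟨hy, z, rfl⟩, hmax⟩, _, rfl, rfl⟩, rfl⟩
    exact ⟨_, hx, _, hy, _, u, z, v, _, rfl, rfl, hu, hv, by simp, hmax⟩

theorem Set.Finite.isRegular_maxSdiLang {L R : Language α} (hL : (L : Set (List α)).Finite)
    (hR : R.IsRegular) : IsRegular (maxSdiLang L R) := by
  rw [maxSdiLang_eq_iSup_singleton_mul]
  refine isRegular_biSup hL fun x _ => isRegular_biSup (List.finite_setOf_isPrefix x) fun x₁ _ =>
    isRegular_biSup (List.finite_setOf_isInfix x) fun u _ =>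
      isRegular_biSup (List.finite_setOf_isInfix x) fun v _ =>
        isRegular_biSup ((List.finite_setOf_isSuffix x).subset ?_) fun x₂ _ =>
          (isRegular_singleton x₁).mul (((hR.inf (isRegular_framed u v)).inf
            (isRegular_setOf_not_exists_extension x₁ u v x₂)).mul (isRegular_singleton x₂))
  rintro x₂ ⟨-, -, rfl⟩
  exact ⟨x₁ ++ u ++ v, rfl⟩

theorem minSdiLang_eq_iSup_singleton_mul (L R : Language α) :
    minSdiLang L R = (⨆ x ∈ L, ⨆ x₁ ∈ {x₁ | x₁ <+: x}, ⨆ u ∈ {u | u <:+: x},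
      ⨆ v ∈ {v | v <:+: x},
        ⨆ x₂ ∈ {x₂ | u ≠ [] ∧ v ≠ [] ∧ x = x₁ ++ u ++ v ++ x₂ ∧ u.Unbordered ∧ v.Unbordered},
          {x₁} * ((R ⊓ framed u v) * {x₂}) : Language α) := by
  refine Language.ext fun w => ?_
  simp only [minSdiLang, minSdiStr, mem_iSup, mem_mul, mem_singleton,
    ← List.unbordered_iff_forall_isPrefix]
  constructor
  · rintro ⟨x, hx, y, hy, x₁, u, z, v, x₂, rfl, rfl, hu, hv, rfl, hU, hV⟩
    exact ⟨_, hx, x₁, ⟨u ++ v ++ x₂, by simp⟩, u, ⟨x₁, v ++ x₂, by simp⟩, v,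
      ⟨x₁ ++ u, x₂, rfl⟩, x₂, ⟨hu, hv, rfl, hU, hV⟩, x₁, rfl, _,
      ⟨u ++ z ++ v, ⟨hy, z, rfl⟩, x₂, rfl, rfl⟩, by simp⟩
  · rintro ⟨x, hx, x₁, -, u, -, v, -, x₂, ⟨hu, hv, rfl, hU, hV⟩, _, rfl, _,
      ⟨y, ⟨hy, z, rfl⟩, _, rfl, rfl⟩, rfl⟩
    exact ⟨_, hx, _, hy, _, u, z, v, _, rfl, rfl, hu, hv, by simp, hU, hV⟩

theorem Set.Finite.isRegular_minSdiLang {L R : Language α} (hL : (L : Set (List α)).Finite)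
    (hR : R.IsRegular) : IsRegular (minSdiLang L R) := by
  rw [minSdiLang_eq_iSup_singleton_mul]
  refine isRegular_biSup hL fun x _ => isRegular_biSup (List.finite_setOf_isPrefix x) fun x₁ _ =>
    isRegular_biSup (List.finite_setOf_isInfix x) fun u _ =>
      isRegular_biSup (List.finite_setOf_isInfix x) fun v _ =>
        isRegular_biSup ((List.finite_setOf_isSuffix x).subset ?_) fun x₂ _ =>
          (isRegular_singleton x₁).mul
            ((hR.inf (isRegular_framed u v)).mul (isRegular_singleton x₂))
  rintro x₂ ⟨-, -, rfl, -⟩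
  exact ⟨x₁ ++ u ++ v, rfl⟩

end SiteDirectedInsertion

/-- Maximal/minimal SDI of a finite language into a regular language
(and vice versa) is regular. -/
theorem maxMinSdi_finite_regular {α : Type} (R L : Language α)
    (hR : R.IsRegular) (hL : Set.Finite (L : Set (List α))) :
    Language.IsRegular (maxSdiLang R L) ∧ Language.IsRegular (minSdiLang R L) ∧
    Language.IsRegular (maxSdiLang L R) ∧ Language.IsRegular (minSdiLang L R) :=
  ⟨hR.maxSdiLang_of_finite hL, hR.minSdiLang_of_finite hL, hL.isRegular_maxSdiLang hR,
    hL.isRegular_minSdiLang hR⟩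
end

section
/- If M is an NFA with m states and N is an NFA with n states, then the language L(M) ←a-sdi L(N) is accepted by some NFA with at most mn + 2m states. -/
/-!
The automaton runs `M` on `x₁ a`, then freezes `M` in the state it reached and runs `N` on
`a z b`, starting `N` on the letter `a` that `M` just read. On the letter `b` at which `N`
accepts, `M` resumes from its frozen state and reads `b x₂`. The three phases use `m`, `mn`
and `m` states.
-/

namespace NFA

section

variable {α σ : Type} {M : NFA α σ}

theorem mem_acceptsFrom_iff_exists_singleton {S : Set σ} {x : List α} :
    x ∈ M.acceptsFrom S ↔ ∃ s ∈ S, x ∈ M.acceptsFrom {s} := by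
  simp only [mem_acceptsFrom, mem_evalFrom_iff_exists (S := S)]
  exact ⟨fun ⟨s, hs, t, ht, h⟩ => ⟨t, ht, s, hs, h⟩, fun ⟨t, ht, s, hs, h⟩ => ⟨s, hs, t, ht, h⟩⟩

theorem mem_accepts_iff_exists_start {x : List α} :
    x ∈ M.accepts ↔ ∃ s ∈ M.start, x ∈ M.acceptsFrom {s} :=
  mem_acceptsFrom_iff_exists_singleton

theorem cons_mem_acceptsFrom_singleton {s : σ} {a : α} {x : List α} :
    a :: x ∈ M.acceptsFrom {s} ↔ ∃ t ∈ M.step s a, x ∈ M.acceptsFrom {t} := by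
  rw [cons_mem_acceptsFrom, stepSet_singleton, mem_acceptsFrom_iff_exists_singleton]

theorem singleton_mem_acceptsFrom_singleton {s : σ} {a : α} :
    [a] ∈ M.acceptsFrom {s} ↔ ∃ t ∈ M.step s a, t ∈ M.accept := by
  simp

theorem cons_mem_accepts {a : α} {x : List α} :
    a :: x ∈ M.accepts ↔ ∃ s ∈ M.stepSet M.start a, x ∈ M.acceptsFrom {s} := by
  rw [accepts_eq_acceptsFrom_start, cons_mem_acceptsFrom, mem_acceptsFrom_iff_exists_singleton]

end

section

variable {α σM σN : Type} (M : NFA α σM) (N : NFA α σN)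

/-- The transitions of `M.asdi N`. A state `inl p` is `M` in state `p` before the insertion
site, `inr (inl (q, s))` is `M` frozen in `q` (after reading `a`) while `N` is in `s`, and
`inr (inr r)` is `M` in state `r` after the insertion site. -/
def AsdiStep : σM ⊕ σM × σN ⊕ σM → α → σM ⊕ σM × σN ⊕ σM → Prop
  | .inl p, c, .inl p' => p' ∈ M.step p c
  | .inl p, c, .inr (.inl (q, s)) => q ∈ M.step p c ∧ s ∈ N.stepSet N.start c
  | .inr (.inl (q, s)), c, .inr (.inl (q', s')) => q' = q ∧ s' ∈ N.step s c
  | .inr (.inl (q, s)), c, .inr (.inr r) => r ∈ M.step q c ∧ ∃ s' ∈ N.step s c, s' ∈ N.accept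
  | .inr (.inr r), c, .inr (.inr r') => r' ∈ M.step r c
  | _, _, _ => False

def asdi : NFA α (σM ⊕ σM × σN ⊕ σM) where
  step st c := {t | AsdiStep M N st c t}
  start := Sum.inl '' M.start
  accept := Sum.inr ∘ Sum.inr '' M.accept

theorem asdi_start : (M.asdi N).start = Sum.inl '' M.start :=
  rfl

theorem mem_asdi_step {st t : σM ⊕ σM × σN ⊕ σM} {c : α} :
    t ∈ (M.asdi N).step st c ↔ AsdiStep M N st c t :=
  Iff.rfl

theorem acceptsFrom_asdi_after (r : σM) :
    (M.asdi N).acceptsFrom {.inr (.inr r)} = M.acceptsFrom {r} := by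
  ext w
  induction w generalizing r with
  | nil => simp [asdi]
  | cons c w ih =>
    simp only [cons_mem_acceptsFrom_singleton, mem_asdi_step, Sum.exists, AsdiStep, false_and,
      exists_false, false_or, ih]

theorem mem_acceptsFrom_asdi_inside (q : σM) (s : σN) (w : List α) :
    w ∈ (M.asdi N).acceptsFrom {.inr (.inl (q, s))} ↔
      ∃ z b x₂, w = z ++ b :: x₂ ∧ z ++ [b] ∈ N.acceptsFrom {s} ∧
        b :: x₂ ∈ M.acceptsFrom {q} := by
  induction w generalizing s with
  | nil => simp [asdi]
  | cons c w ih =>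
    rw [cons_mem_acceptsFrom_singleton]
    simp only [mem_asdi_step, Sum.exists, Prod.exists, AsdiStep, false_and, exists_false,
      false_or, and_assoc, exists_and_left, exists_eq_left, acceptsFrom_asdi_after]
    constructor
    · rintro (⟨s', hs', hw⟩ | ⟨r, hr, hacc, hw⟩)
      · obtain ⟨z, b, x₂, rfl, hz, hb⟩ := (ih s').1 hw
        exact ⟨c :: z, b, x₂, rfl, cons_mem_acceptsFrom_singleton.2 ⟨s', hs', hz⟩, hb⟩
      · exact ⟨[], c, w, rfl, singleton_mem_acceptsFrom_singleton.2 hacc,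
          cons_mem_acceptsFrom_singleton.2 ⟨r, hr, hw⟩⟩
    · rintro ⟨_ | ⟨d, z⟩, b, x₂, h, hz, hb⟩
      · obtain ⟨rfl, rfl⟩ := List.cons.inj h
        obtain ⟨r, hr, hw⟩ := cons_mem_acceptsFrom_singleton.1 hb
        exact Or.inr ⟨r, hr, singleton_mem_acceptsFrom_singleton.1 hz, hw⟩
      · obtain ⟨rfl, rfl⟩ := List.cons.inj h
        obtain ⟨s', hs', hz⟩ := cons_mem_acceptsFrom_singleton.1 hz
        exact Or.inl ⟨s', hs', (ih s').2 ⟨z, b, x₂, rfl, hz, hb⟩⟩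

theorem mem_acceptsFrom_asdi_before (p : σM) (w : List α) :
    w ∈ (M.asdi N).acceptsFrom {.inl p} ↔ ∃ x₁ a z b x₂, w = x₁ ++ a :: (z ++ b :: x₂) ∧
      x₁ ++ a :: b :: x₂ ∈ M.acceptsFrom {p} ∧ a :: (z ++ [b]) ∈ N.accepts := by
  induction w generalizing p with
  | nil => simp [asdi]
  | cons c w ih =>
    rw [cons_mem_acceptsFrom_singleton]
    simp only [mem_asdi_step, Sum.exists, Prod.exists, AsdiStep, false_and, exists_false,
      or_false, ih, mem_acceptsFrom_asdi_inside]
    constructor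
    · rintro (⟨p', hp', x₁, a, z, b, x₂, rfl, hx, hy⟩ | ⟨q, s, ⟨hq, hs⟩, z, b, x₂, rfl, hz, hx⟩)
      · exact ⟨c :: x₁, a, z, b, x₂, rfl, cons_mem_acceptsFrom_singleton.2 ⟨p', hp', hx⟩, hy⟩
      · exact ⟨[], c, z, b, x₂, rfl, cons_mem_acceptsFrom_singleton.2 ⟨q, hq, hx⟩,
          cons_mem_accepts.2 ⟨s, hs, hz⟩⟩
    · rintro ⟨_ | ⟨d, x₁⟩, a, z, b, x₂, h, hx, hy⟩
      · obtain ⟨rfl, rfl⟩ := List.cons.inj h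
        obtain ⟨q, hq, hx⟩ := cons_mem_acceptsFrom_singleton.1 hx
        obtain ⟨s, hs, hz⟩ := cons_mem_accepts.1 hy
        exact Or.inr ⟨q, s, ⟨hq, hs⟩, z, b, x₂, rfl, hz, hx⟩
      · obtain ⟨rfl, rfl⟩ := List.cons.inj h
        obtain ⟨p', hp', hx⟩ := cons_mem_acceptsFrom_singleton.1 hx
        exact Or.inl ⟨p', hp', x₁, a, z, b, x₂, rfl, hx, hy⟩

theorem mem_asdi_accepts (w : List α) :
    w ∈ (M.asdi N).accepts ↔ ∃ x₁ a z b x₂, w = x₁ ++ a :: (z ++ b :: x₂) ∧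
      x₁ ++ a :: b :: x₂ ∈ M.accepts ∧ a :: (z ++ [b]) ∈ N.accepts := by
  rw [mem_accepts_iff_exists_start, asdi_start, Set.exists_mem_image]
  simp only [mem_acceptsFrom_asdi_before, mem_accepts_iff_exists_start (M := M)]
  constructor
  · rintro ⟨p, hp, x₁, a, z, b, x₂, rfl, hx, hy⟩
    exact ⟨x₁, a, z, b, x₂, rfl, ⟨p, hp, hx⟩, hy⟩
  · rintro ⟨x₁, a, z, b, x₂, rfl, ⟨p, hp, hx⟩, hy⟩
    exact ⟨p, hp, x₁, a, z, b, x₂, rfl, hx, hy⟩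

end

end NFA

theorem mem_asdiLang {α : Type} {L₁ L₂ : Set (List α)} {w : List α} :
    w ∈ asdiLang L₁ L₂ ↔ ∃ x₁ a z b x₂, w = x₁ ++ a :: (z ++ b :: x₂) ∧
      x₁ ++ a :: b :: x₂ ∈ L₁ ∧ a :: (z ++ [b]) ∈ L₂ := by
  constructor
  · rintro ⟨_, hx, _, hy, x₁, x₂, z, a, b, rfl, rfl, rfl⟩
    exact ⟨x₁, a, z, b, x₂, by simp, by simpa using hx, by simpa using hy⟩
  · rintro ⟨x₁, a, z, b, x₂, rfl, hx, hy⟩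
    exact ⟨_, hx, _, hy, x₁, x₂, z, a, b, by simp, by simp, by simp⟩

/-- If `M` is an NFA with `m` states and `N` an NFA with `n` states, then
`L(M) ←a-sdi L(N)` is accepted by an NFA with at most `mn + 2m` states. -/
theorem asdi_nfa_upper_bound {α : Type} {σM σN : Type} [Fintype σM] [Fintype σN]
    {m n : ℕ} (M : NFA α σM) (N : NFA α σN)
    (hm : Fintype.card σM = m) (hn : Fintype.card σN = n) :
    ∃ (σ : Type) (inst : Fintype σ) (C : NFA α σ),
      @Fintype.card σ inst ≤ m * n + 2 * m ∧
      C.accepts = asdiLang M.accepts N.accepts := by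
  refine ⟨_, inferInstance, M.asdi N, ?_, ?_⟩
  · simp only [Fintype.card_sum, Fintype.card_prod, hm, hn]
    omega
  · ext w
    exact (M.mem_asdi_accepts N w).trans mem_asdiLang.symm
end
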